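/- arXiv:1805.09535 — 2 statements merged into one kernel-verified Lean document; each statement's English description precedes it below -/
import Mathlib

section
/- Every solution of a one-variable word equation in normal form is zero-sum, i.e., if [x] is a solution then σ(x) = 0. -/
/-- `assemble x [u₀, u₁, …, uₙ]` is the word `u₀ x u₁ x ⋯ x uₙ`. -/
def assemble (x : List ℝ) (cs : List (List ℝ)) : List ℝ :=
  (cs.intersperse x).flatten

/-- The "area" functional: `phi w = ∑ i, i * w i`. -/
def phi : List ℝ → ℝ
  | [] => 0
  | _ :: t => t.sum + phi t

lemma phi_append (a b : List ℝ) :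
    phi (a ++ b) = phi a + phi b + a.length * b.sum := by
  induction a with
  | nil => simp [phi]
  | cons h t ih =>
    simp only [List.cons_append, phi, List.append_eq, List.sum_append, ih, List.length_cons]
    push_cast
    ring

/-- `Bb [c₀,…,cₙ] = ∑ i, i * (cᵢ.sum)`. -/
def Bb : List (List ℝ) → ℝ
  | [] => 0
  | _ :: rest => Bb rest + rest.flatten.sum

/-- `Cc [c₀,…,cₙ] = ∑_{i<n} |c₀⋯cᵢ|`. -/
def Cc : List (List ℝ) → ℝ
  | [] => 0
  | c :: rest => Cc rest + (c.length : ℝ) * rest.length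

/-- `e n = ∑_{i<n} i`. -/
def e : ℕ → ℝ
  | 0 => 0
  | k + 1 => e k + k

lemma assemble_cons (x c c' : List ℝ) (rest : List (List ℝ)) :
    assemble x (c :: c' :: rest) = c ++ x ++ assemble x (c' :: rest) := by
  simp [assemble]

lemma assemble_singleton (x c : List ℝ) : assemble x [c] = c := by
  simp [assemble]

lemma assemble_nil (cs : List (List ℝ)) : assemble [] cs = cs.flatten := by
  induction cs with
  | nil => rfl
  | cons c rest ih =>
    cases rest with
    | nil => simp [assemble]
    | cons c' rest' =>
      rw [assemble_cons, ih]
      simp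

lemma sum_assemble (x : List ℝ) (cs : List (List ℝ)) (c : List ℝ) :
    (assemble x (c :: cs)).sum = (c :: cs).flatten.sum + (cs.length : ℝ) * x.sum := by
  induction cs generalizing c with
  | nil => simp [assemble_singleton]
  | cons c' rest ih =>
    rw [assemble_cons]
    simp only [List.sum_append, ih c', List.flatten_cons, List.length_cons, List.sum_append]
    push_cast
    ring

lemma phi_assemble (x : List ℝ) (cs : List (List ℝ)) (c : List ℝ) :
    phi (assemble x (c :: cs)) = phi (c :: cs).flatten + (cs.length : ℝ) * phi x
      + (x.length : ℝ) * Bb (c :: cs) + x.sum * Cc (c :: cs)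
      + x.sum * x.length * e cs.length := by
  induction cs generalizing c with
  | nil => simp [assemble_singleton, Bb, Cc, e]
  | cons c' rest ih =>
    rw [assemble_cons, phi_append, phi_append, ih c', sum_assemble]
    simp only [List.flatten_cons, phi_append, List.sum_append, List.length_append,
      Bb, Cc, e, List.length_cons]
    push_cast
    ring

lemma Cc_eq (cs : List (List ℝ)) :
    Cc cs = ∑ i ∈ Finset.range (cs.length - 1),
      (((cs.take (i + 1)).flatten).length : ℝ) := by
  induction cs with
  | nil => simp [Cc]
  | cons c rest ih =>
    simp only [Cc, ih, List.length_cons, Nat.add_sub_cancel, List.take_succ_cons,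
      List.flatten_cons, List.length_append]
    push_cast
    rw [Finset.sum_add_distrib, Finset.sum_const, Finset.card_range, nsmul_eq_mul]
    cases rest with
    | nil => simp
    | cons c' rest' =>
      rw [List.length_cons,
        Finset.sum_range_succ' (fun i => (((c' :: rest').take i).flatten.length : ℝ))]
      simp only [List.take_zero, List.flatten_nil, List.length_nil, Nat.cast_zero, add_zero,
        List.length_cons, Nat.add_sub_cancel]
      push_cast
      ring

/-- every solution of a one-variable equation
`u₀ X u₁ ⋯ X uₙ = v₀ X v₁ ⋯ X vₙ` (n ≥ 1) in normal form is zero-sum.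
Normal form: (N1) the empty solution and a nonempty zero-sum solution exist;
(N2) |u₀⋯uᵢ| < |v₀⋯vᵢ| for 0 ≤ i ≤ n−1;
(N3) |u₀⋯uᵢ| ≤ |v₀⋯v_{i−1}| for 0 ≤ i ≤ n. -/
theorem normal_form_solutions_zero_sum
    (us vs : List (List ℝ)) (hlen : us.length = vs.length) (hn : 2 ≤ us.length)
    (hN1 : assemble [] us = assemble [] vs ∧
      ∃ x : List ℝ, x ≠ [] ∧ x.sum = 0 ∧ assemble x us = assemble x vs)
    (hN2 : ∀ i, i + 1 < us.length →
      ((us.take (i + 1)).flatten).length < ((vs.take (i + 1)).flatten).length)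
    (hN3 : ∀ i, i < us.length →
      ((us.take (i + 1)).flatten).length ≤ ((vs.take i).flatten).length)
    (x : List ℝ) (hx : assemble x us = assemble x vs) :
    x.sum = 0 := by
  obtain ⟨hflat0, x₀, hx₀ne, hx₀sum, hx₀⟩ := hN1
  rw [assemble_nil, assemble_nil] at hflat0
  obtain ⟨u, us'⟩ : ∃ u us', us = u :: us' := by
    cases us with
    | nil => simp at hn
    | cons u us' => exact ⟨u, us', rfl⟩
  obtain ⟨us', rfl⟩ := us'
  obtain ⟨v, vs'⟩ : ∃ v vs', vs = v :: vs' := by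
    cases vs with
    | nil => rw [hlen] at hn; simp at hn
    | cons v vs' => exact ⟨v, vs', rfl⟩
  obtain ⟨vs', rfl⟩ := vs'
  have hlen' : us'.length = vs'.length := by simpa using hlen
  have key : ∀ y : List ℝ, assemble y (u :: us') = assemble y (v :: vs') →
      (y.length : ℝ) * Bb (u :: us') + y.sum * Cc (u :: us')
        = (y.length : ℝ) * Bb (v :: vs') + y.sum * Cc (v :: vs') := by
    intro y hy
    have h := congrArg phi hy
    rw [phi_assemble, phi_assemble, hflat0, hlen'] at h
    linarith
  have hBb : Bb (u :: us') = Bb (v :: vs') := by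
    have h := key x₀ hx₀
    rw [hx₀sum] at h
    have hl : (0 : ℝ) < (x₀.length : ℝ) := by
      have : 0 < x₀.length := List.length_pos_iff.mpr hx₀ne
      exact_mod_cast this
    have h2 : (x₀.length : ℝ) * Bb (u :: us') = (x₀.length : ℝ) * Bb (v :: vs') := by
      linarith
    exact mul_left_cancel₀ hl.ne' h2
  have hCc : Cc (u :: us') < Cc (v :: vs') := by
    rw [Cc_eq, Cc_eq]
    simp only [List.length_cons, Nat.add_sub_cancel, hlen']
    apply Finset.sum_lt_sum_of_nonempty
    · rw [Finset.nonempty_range_iff]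
      have : 1 ≤ us'.length := by
        simp only [List.length_cons] at hn
        omega
      omega
    · intro i hi
      rw [Finset.mem_range] at hi
      have h2 := hN2 i (by simp only [List.length_cons]; omega)
      exact_mod_cast h2
  have h := key x hx
  rw [hBb] at h
  have hz : x.sum * (Cc (v :: vs') - Cc (u :: us')) = 0 := by linarith
  rcases mul_eq_zero.mp hz with h' | h'
  · exact h'
  · linarith
end

section
/- Consider a nontrivial one-variable equation (u0 X u1 ⋯ X un, v0 X v1 ⋯ X vn) over a real alphabet. Let s_i = σ(u0⋯u_{i−1}) and t_i = σ(v0⋯v_{i−1}) for 1 ≤ i ≤ n. If the equation has at least two zero-sum solutions, then (s1, ..., sn) is a permutation of (t1, ..., tn) (as multisets). -/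
/-!
Give each letter a weight in a commutative monoid `M` with unique sums (such as `ℝ × ℕ`) and
encode a word `w` by `P(w) = ∑ T^{weight(w.take j)}`, `j < |w|`, in `ℤ[M]`. Then
`P(a ++ b) = P(a) + T^{weight a} P(b)`, and if `x` and `y` have equal weight,
`P(u₀ x u₁ ⋯ x uₙ) - P(u₀ y u₁ ⋯ y uₙ) = (∑ᵢ T^{sᵢ}) (P(x) - P(y))`,
where the `sᵢ` are the weights of the prefixes that end before an occurrence of the variable.
As `ℤ[M]` has no zero divisors, two solutions `x`, `y` with `P(x) ≠ P(y)` force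
`∑ T^{sᵢ} = ∑ T^{tᵢ}`, i.e. equal multisets of offsets. For zero-sum `x ≠ y` take the letter sum
as weight if `|x| ≠ |y|` (then `P(x)` and `P(y)` have different numbers of terms), and the pair
(letter sum, length) if `|x| = |y|` (then `P` recovers all prefix sums, hence the word).
-/

open AddMonoidAlgebra

section Words

variable {α M : Type*} [AddCommMonoid M] (f : α → M)

def prefixWeights (w : List α) : Multiset M :=
  ((List.range w.length).map fun j => ((w.take j).map f).sum : List M)

-- The weights `σ(u₀ X u₁ ⋯ X uᵢ)`, `i < n`, of the prefixes of `u₀ X u₁ ⋯ X uₙ` that end just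
-- before an occurrence of `X`, when `X` has weight `c`.
def varOffsets (c : M) (cs : List (List α)) : Multiset M :=
  ((List.range (cs.length - 1)).map fun i => ((cs.take (i + 1)).flatten.map f).sum + i • c : List M)

theorem card_prefixWeights (w : List α) : Multiset.card (prefixWeights f w) = w.length := by
  simp [prefixWeights]

theorem prefixWeights_append (a b : List α) :
    prefixWeights f (a ++ b) =
      prefixWeights f a + (prefixWeights f b).map ((a.map f).sum + ·) := by
  simp only [prefixWeights, List.length_append, List.range_add, List.map_append, List.map_map,
    Multiset.map_coe, Multiset.coe_add]
  congr 2
  · refine List.map_congr_left fun j hj => ?_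
    rw [List.take_append_of_le_length (List.mem_range.mp hj).le]
  · refine List.map_congr_left fun j _ => ?_
    rw [Function.comp_apply, Function.comp_apply, List.take_length_add_append, List.map_append,
      List.sum_append]

theorem varOffsets_cons_cons (c : M) (a b : List α) (t : List (List α)) :
    varOffsets f c (a :: b :: t) =
      (a.map f).sum ::ₘ (varOffsets f c (b :: t)).map ((a.map f).sum + c + ·) := by
  simp only [varOffsets, List.length_cons, Nat.add_sub_cancel, List.range_succ_eq_map,
    List.map_cons, List.map_map, Multiset.map_coe, Multiset.cons_coe]
  congr 2
  · simp
  · refine List.map_congr_left fun i _ => ?_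
    rw [Function.comp_apply, Function.comp_apply, List.take_succ_cons, List.flatten_cons,
      List.map_append, List.sum_append, succ_nsmul]
    abel

theorem varOffsets_map {N : Type*} [AddCommMonoid N] (g : M →+ N) (c : M) (cs : List (List α)) :
    (varOffsets f c cs).map g = varOffsets (g ∘ f) (g c) cs := by
  simp only [varOffsets, Multiset.map_coe, List.map_map]
  congr 2
  ext i
  simp only [Function.comp_apply, map_add, map_nsmul, map_list_sum, List.map_map]

end Words

section GroupRing

variable {M : Type*} [AddCommMonoid M]

variable (M) in
noncomputable def genFun : Multiset M →+ AddMonoidAlgebra ℤ M :=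
  Multiset.sumAddMonoidHom.comp (Multiset.mapAddMonoidHom (of' ℤ M))

theorem AddMonoidAlgebra.of'_add {R : Type*} [Semiring R] (a b : M) :
    of' R M (a + b) = of' R M a * of' R M b := by
  simp [of', single_mul_single]

theorem genFun_cons (m : M) (s : Multiset M) : genFun M (m ::ₘ s) = of' ℤ M m + genFun M s := by
  simp [genFun]

theorem genFun_map_add (c : M) (s : Multiset M) :
    genFun M (s.map (c + ·)) = of' ℤ M c * genFun M s := by
  induction s using Multiset.induction_on with
  | empty => simp
  | cons a s ih =>
    rw [Multiset.map_cons, genFun_cons, genFun_cons, ih, mul_add, of'_add]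

theorem coeff_genFun [DecidableEq M] (s : Multiset M) (m : M) :
    (genFun M s).coeff m = s.count m := by
  induction s using Multiset.induction_on with
  | empty => simp
  | cons a s ih =>
    simp [genFun_cons, ih, of', coeff_single, Finsupp.single_apply, Multiset.count_cons, eq_comm,
      add_comm]

theorem genFun_injective : Function.Injective (genFun M) := by
  classical
  intro s t h
  ext m
  exact_mod_cast (coeff_genFun s m).symm.trans ((congrArg (coeff · m) h).trans (coeff_genFun t m))

end GroupRing

section Equations

variable {α M : Type*} [AddCommMonoid M] (f : α → M)

theorem genFun_prefixWeights_sub {x y : List α} (hw : (x.map f).sum = (y.map f).sum)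
    (cs : List (List α)) :
    genFun M (prefixWeights f (cs.intersperse x).flatten) -
        genFun M (prefixWeights f (cs.intersperse y).flatten) =
      genFun M (varOffsets f (x.map f).sum cs) *
        (genFun M (prefixWeights f x) - genFun M (prefixWeights f y)) := by
  induction cs with
  | nil => simp [varOffsets]
  | cons a cs ih =>
    cases cs with
    | nil => simp [varOffsets]
    | cons b t =>
      simp only [List.intersperse_cons_cons, List.flatten_cons, prefixWeights_append,
        varOffsets_cons_cons, map_add, genFun_map_add, genFun_cons, ← hw] at ih ⊢
      rw [of'_add]
      linear_combination (of' ℤ M (a.map f).sum * of' ℤ M (x.map f).sum) * ih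

theorem varOffsets_eq_of_two_solutions [UniqueSums M] {x y : List α} {us vs : List (List α)}
    (hw : (x.map f).sum = (y.map f).sum) (hne : prefixWeights f x ≠ prefixWeights f y)
    (hx : (us.intersperse x).flatten = (vs.intersperse x).flatten)
    (hy : (us.intersperse y).flatten = (vs.intersperse y).flatten) :
    varOffsets f (x.map f).sum us = varOffsets f (x.map f).sum vs := by
  have hu := genFun_prefixWeights_sub f hw us
  have hv := genFun_prefixWeights_sub f hw vs
  rw [hx, hy, hv] at hu
  have hsub : genFun M (prefixWeights f x) - genFun M (prefixWeights f y) ≠ 0 :=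
    sub_ne_zero.mpr (genFun_injective.ne hne)
  exact genFun_injective (mul_right_cancel₀ hsub hu).symm

end Equations

theorem sum_map_pair_one {G : Type*} [AddCommMonoid G] (l : List G) :
    (l.map fun a => (a, 1)).sum = (l.sum, l.length) := by
  induction l with
  | nil => rfl
  | cons a l ih => simp [ih, add_comm]

theorem eq_of_prefixWeights_pair_eq {G : Type*} [AddCancelCommMonoid G] {x y : List G}
    (hs : x.sum = y.sum)
    (h : prefixWeights (fun a => (a, 1)) x = prefixWeights (fun a => (a, 1)) y) : x = y := by
  have hl : x.length = y.length := by simpa [card_prefixWeights] using congrArg Multiset.card h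
  refine List.eq_of_sum_take_eq hl fun j hj => ?_
  rcases hj.lt_or_eq with hj | rfl
  · have hmem : ((x.take j).sum, j) ∈ prefixWeights (fun a => (a, 1)) y := by
      rw [← h, prefixWeights, Multiset.mem_coe, List.mem_map]
      refine ⟨j, List.mem_range.mpr hj, ?_⟩
      rw [sum_map_pair_one, List.length_take_of_le hj.le]
    obtain ⟨k, hk, hsum⟩ := List.mem_map.mp (Multiset.mem_coe.mp hmem)
    rw [sum_map_pair_one, Prod.mk.injEq, List.length_take_of_le (List.mem_range.mp hk).le] at hsum
    obtain ⟨hsum, rfl⟩ := hsum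
    exact hsum.symm
  · rw [List.take_length, hl, List.take_length, hs]

theorem prefix_sums_permutation_general
    (us vs : List (List ℝ)) (hlen : us.length = vs.length)
    (x y : List ℝ) (hxy : x ≠ y) (hxs : x.sum = 0) (hys : y.sum = 0)
    (hx : assemble x us = assemble x vs) (hy : assemble y us = assemble y vs) :
    (((List.range (us.length - 1)).map
        fun i => ((us.take (i + 1)).flatten).sum : List ℝ) : Multiset ℝ) =
    (((List.range (us.length - 1)).map
        fun i => ((vs.take (i + 1)).flatten).sum : List ℝ) : Multiset ℝ) := by
  suffices varOffsets id 0 us = varOffsets id 0 vs by simpa [varOffsets, hlen] using this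
  by_cases hl : x.length = y.length
  · have key := varOffsets_eq_of_two_solutions (fun a : ℝ => (a, 1))
      (by simp [sum_map_pair_one, hxs, hys, hl])
      (fun h => hxy (eq_of_prefixWeights_pair_eq (hxs.trans hys.symm) h)) hx hy
    have := congrArg (Multiset.map (AddMonoidHom.fst ℝ ℕ)) key
    rwa [varOffsets_map, varOffsets_map, sum_map_pair_one, AddMonoidHom.coe_fst, hxs] at this
  · have key := varOffsets_eq_of_two_solutions id (by simp [hxs, hys])
      (fun h => hl (by simpa [card_prefixWeights] using congrArg Multiset.card h)) hx hy
    simpa [hxs] using key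

/-- for a nontrivial one-variable equation
`u₀ X u₁ ⋯ X uₙ = v₀ X v₁ ⋯ X vₙ` (n ≥ 1) with at least two zero-sum
solutions, the tuple (s₁, …, sₙ) with sᵢ = σ(u₀⋯u_{i−1}) is a permutation of
(t₁, …, tₙ) with tᵢ = σ(v₀⋯v_{i−1}). -/
theorem prefix_sums_permutation
    (us vs : List (List ℝ)) (hlen : us.length = vs.length) (hn : 2 ≤ us.length)
    (hnontriv : us ≠ vs)
    (x y : List ℝ) (hxy : x ≠ y) (hxs : x.sum = 0) (hys : y.sum = 0)
    (hx : assemble x us = assemble x vs) (hy : assemble y us = assemble y vs) :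
    (((List.range (us.length - 1)).map
        fun i => ((us.take (i + 1)).flatten).sum : List ℝ) : Multiset ℝ) =
    (((List.range (us.length - 1)).map
        fun i => ((vs.take (i + 1)).flatten).sum : List ℝ) : Multiset ℝ) :=
  prefix_sums_permutation_general us vs hlen x y hxy hxs hys hx hy
end
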